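/- Let F, F* be T-tuples of subsets of [n] with coverage values v_i, v*_i as above, ε ∈ (0,1), α ≥ 4 an integer, and let S = {i ∈ [n] : v_i < v*_i / (α(2.25+ε))}. If |S| > n/α, then there exists τ ∈ [T] with φ(F*_τ, F_{-τ}) - φ(F) ≥ εn/(2T). -/

import Mathlib

/-- Coverage value of agent `i` under solution `F`. -/
def cov {n T : ℕ} (F : Fin T → Finset (Fin n)) (i : Fin n) : ℕ :=
  1 + (Finset.univ.filter fun t => i ∈ F t).card

/-- Log social welfare of a solution. -/
noncomputable def phi {n T : ℕ} (F : Fin T → Finset (Fin n)) : ℝ :=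
  ∑ i, Real.log (cov F i)

/-!
Replacing `F τ` by `F* τ` moves each coverage value by at most one, and
`log w - log v ≥ (w - v) / w`. Summed over `τ`, agent `i` loses at most
`(v_i - 1) / (v_i - 1) ≤ 1` in log-coverage, while each of the at least `v*_i - v_i` rounds with
`i ∈ F*_τ \ F_τ` gains at least `1 / (v_i + 1)`. So every agent changes by at least `-1`, and an
agent of `S` by at least `(α(2.25 + ε) - 1) / 2 - 1`. As `|S| > n / α`, the total change over all
agents and all `τ` exceeds `εn / 2`, and some `τ` reaches the average.
-/

open Finset Real

lemma Real.sub_div_le_log_sub_log {v w : ℝ} (hv : 0 < v) (hw : 0 < w) :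
    (w - v) / w ≤ log w - log v := by
  have h := one_sub_inv_le_log_of_pos (div_pos hw hv)
  rwa [log_div hw.ne' hv.ne', inv_div, one_sub_div hw.ne'] at h

section Coverage

variable {n T : ℕ}

noncomputable def deviationGain (F Fstar : Fin T → Finset (Fin n)) (i : Fin n) : ℝ :=
  ∑ τ, (log (cov (Function.update F τ (Fstar τ)) i) - log (cov F i))

lemma sum_deviationGain (F Fstar : Fin T → Finset (Fin n)) :
    ∑ i, deviationGain F Fstar i = ∑ τ, (phi (Function.update F τ (Fstar τ)) - phi F) := by
  simp only [deviationGain]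
  rw [sum_comm]
  simp only [phi, sum_sub_distrib]

lemma cov_eq_one_add_sum (F : Fin T → Finset (Fin n)) (i : Fin n) :
    (cov F i : ℝ) = 1 + ∑ t, if i ∈ F t then 1 else 0 := by
  simp [cov]

lemma one_le_cov (F : Fin T → Finset (Fin n)) (i : Fin n) : (1 : ℝ) ≤ cov F i := by
  simp [cov]

lemma cov_update (F : Fin T → Finset (Fin n)) (τ : Fin T) (X : Finset (Fin n)) (i : Fin n) :
    (cov (Function.update F τ X) i : ℝ) =
      cov F i + (if i ∈ X then 1 else 0) - (if i ∈ F τ then 1 else 0) := by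
  simp only [cov_eq_one_add_sum, ← add_sum_erase _ _ (mem_univ τ), Function.update_self]
  have hrest : ∑ t ∈ univ.erase τ, (if i ∈ Function.update F τ X t then (1 : ℝ) else 0) =
      ∑ t ∈ univ.erase τ, if i ∈ F t then 1 else 0 :=
    sum_congr rfl fun t ht => by rw [Function.update_of_ne (ne_of_mem_erase ht)]
  rw [hrest]
  ring

-- Every round with `i ∈ F τ` is charged as a loss, so that the charges sum to
-- `(v_i - 1) / (v_i - 1)`.
lemma log_cov_update_sub_log_cov_ge (F : Fin T → Finset (Fin n)) (τ : Fin T)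
    (X : Finset (Fin n)) (i : Fin n) :
    (if i ∈ X \ F τ then 1 else 0) / (cov F i + 1 : ℝ) - (if i ∈ F τ then 1 else 0) / (cov F i - 1)
      ≤ log (cov (Function.update F τ X) i) - log (cov F i) := by
  have hv := one_le_cov F i
  refine le_trans ?_ (sub_div_le_log_sub_log (by linarith)
    (by linarith [one_le_cov (Function.update F τ X) i]))
  rw [cov_update]
  by_cases hX : i ∈ X <;> by_cases hF : i ∈ F τ <;> simp [hX, hF, neg_div]
  exact_mod_cast hv

lemma card_div_sub_one_le_deviationGain (F Fstar : Fin T → Finset (Fin n)) (i : Fin n) :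
    (#{τ | i ∈ Fstar τ \ F τ} : ℝ) / (cov F i + 1) - 1 ≤ deviationGain F Fstar i := by
  have hloss : ∑ τ, (if i ∈ F τ then (1 : ℝ) else 0) = cov F i - 1 := by
    rw [cov_eq_one_add_sum]; ring
  calc (#{τ | i ∈ Fstar τ \ F τ} : ℝ) / (cov F i + 1) - 1
      ≤ (#{τ | i ∈ Fstar τ \ F τ} : ℝ) / (cov F i + 1) - (cov F i - 1) / (cov F i - 1) := by
        gcongr; exact div_self_le_one _
    _ = ∑ τ, ((if i ∈ Fstar τ \ F τ then 1 else 0) / (cov F i + 1 : ℝ) -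
          (if i ∈ F τ then 1 else 0) / (cov F i - 1)) := by
        rw [sum_sub_distrib, ← sum_div, ← sum_div, hloss, sum_boole]
    _ ≤ deviationGain F Fstar i :=
        sum_le_sum fun τ _ => log_cov_update_sub_log_cov_ge F τ (Fstar τ) i

lemma cov_sub_cov_le_card_sdiff (F Fstar : Fin T → Finset (Fin n)) (i : Fin n) :
    (cov Fstar i : ℝ) - cov F i ≤ #{τ | i ∈ Fstar τ \ F τ} := by
  rw [cov_eq_one_add_sum, cov_eq_one_add_sum, ← sum_boole, add_sub_add_left_eq_sub,
    ← sum_sub_distrib]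
  refine sum_le_sum fun τ _ => ?_
  by_cases hX : i ∈ Fstar τ <;> by_cases hF : i ∈ F τ <;> simp [hX, hF]

lemma neg_one_le_deviationGain (F Fstar : Fin T → Finset (Fin n)) (i : Fin n) :
    -1 ≤ deviationGain F Fstar i := by
  refine le_trans ?_ (card_div_sub_one_le_deviationGain F Fstar i)
  have := one_le_cov F i
  have : (0 : ℝ) ≤ #{τ | i ∈ Fstar τ \ F τ} / (cov F i + 1) := by positivity
  linarith

lemma half_sub_one_le_deviationGain (F Fstar : Fin T → Finset (Fin n)) (i : Fin n)
    {c : ℝ} (hc : 1 ≤ c) (hi : c * cov F i ≤ cov Fstar i) :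
    (c - 1) / 2 - 1 ≤ deviationGain F Fstar i := by
  refine le_trans ?_ (card_div_sub_one_le_deviationGain F Fstar i)
  have hv := one_le_cov F i
  have hgain := cov_sub_cov_le_card_sdiff F Fstar i
  rw [sub_le_sub_iff_right, div_le_div_iff₀ two_pos (by linarith)]
  nlinarith

end Coverage

theorem exists_good_update_general {n T : ℕ}
    (F Fstar : Fin T → Finset (Fin n)) (ε : ℝ) (hε : ε ∈ Set.Ioo (0 : ℝ) 1)
    (α : ℕ) (hα : 4 ≤ α)
    (S : Finset (Fin n))
    (hS : S = Finset.univ.filter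
      (fun i => (cov F i : ℝ) < (cov Fstar i : ℝ) / (α * (2.25 + ε))))
    (hcard : (S.card : ℝ) > n / α) :
    ∃ τ : Fin T,
      phi (Function.update F τ (Fstar τ)) - phi F ≥ ε * n / (2 * T) := by
  set c : ℝ := α * (2.25 + ε) with hc_def
  have hε0 := hε.1
  have hα' : (4 : ℝ) ≤ α := by exact_mod_cast hα
  have hc : 1 ≤ c := by nlinarith
  have hagent : ∀ i, -1 + (if i ∈ S then (c - 1) / 2 else 0) ≤ deviationGain F Fstar i := by
    intro i
    split_ifs with hi
    · rw [hS, mem_filter, lt_div_iff₀ (by linarith), mul_comm] at hi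
      linarith [half_sub_one_le_deviationGain F Fstar i hc hi.2.le]
    · linarith [neg_one_le_deviationGain F Fstar i]
  have hαS : (n : ℝ) < α * #S := by rwa [gt_iff_lt, div_lt_iff₀ (by linarith), mul_comm] at hcard
  have htotal : ε * n / 2 < ∑ τ, (phi (Function.update F τ (Fstar τ)) - phi F) :=
    calc ε * n / 2 < -n + #S * ((c - 1) / 2) := by
          rw [hc_def]
          nlinarith [mul_pos (sub_pos.2 hαS) (by linarith : (0 : ℝ) < 2 + ε),
            mul_nonneg (sub_nonneg.2 hα') (#S).cast_nonneg]
      _ = ∑ i, (-1 + if i ∈ S then (c - 1) / 2 else 0) := by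
          rw [sum_add_distrib, sum_ite_mem, univ_inter]; simp
      _ ≤ ∑ i, deviationGain F Fstar i := sum_le_sum fun i _ => hagent i
      _ = _ := sum_deviationGain F Fstar
  -- `ε n / (2T)` is a junk `0` when `T = 0`, so the average is bounded rather than computed.
  have haverage : ∑ _τ : Fin T, ε * n / (2 * T) ≤ ε * n / 2 := by
    rcases T.eq_zero_or_pos with rfl | hT
    · simp; positivity
    · rw [sum_const, card_univ, Fintype.card_fin, nsmul_eq_mul]; field_simp; rfl
  obtain ⟨τ, -, hτ⟩ := exists_lt_of_sum_lt (haverage.trans_lt htotal)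
  exact ⟨τ, hτ.le⟩

theorem exists_good_update {n T : ℕ} (hn : 0 < n) (hT : 0 < T)
    (F Fstar : Fin T → Finset (Fin n)) (ε : ℝ) (hε : ε ∈ Set.Ioo (0 : ℝ) 1)
    (α : ℕ) (hα : 4 ≤ α)
    (S : Finset (Fin n))
    (hS : S = Finset.univ.filter
      (fun i => (cov F i : ℝ) < (cov Fstar i : ℝ) / (α * (2.25 + ε))))
    (hcard : (S.card : ℝ) > n / α) :
    ∃ τ : Fin T,
      phi (Function.update F τ (Fstar τ)) - phi F ≥ ε * n / (2 * T) :=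
  exists_good_update_general F Fstar ε hε α hα S hS hcard
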